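/- Let J be an ideal of R generated by pseudomonomials g₁,…,g_k. Then for every 1 ≤ j ≤ k there exists a pseudomonomial f ∈ CF(J) with f ∣ g_j. -/
import Mathlib


open MvPolynomial

/-- The pseudomonomial `∏_{i∈σ} xᵢ · ∏_{i∈τ} (1 - xᵢ)` in `F₂[x₁,…,xₙ]`. -/
noncomputable def psm (n : ℕ) (σ τ : Finset (Fin n)) : MvPolynomial (Fin n) (ZMod 2) :=
  (∏ i ∈ σ, X i) * ∏ i ∈ τ, (1 - X i)

/-- A polynomial of `F₂[x₁,…,xₙ]` is a pseudomonomial if it has the form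
`∏_{i∈σ} xᵢ · ∏_{i∈τ} (1 - xᵢ)` for disjoint `σ τ`. -/
def IsPseudomonomial {n : ℕ} (f : MvPolynomial (Fin n) (ZMod 2)) : Prop :=
  ∃ σ τ : Finset (Fin n), Disjoint σ τ ∧ f = psm n σ τ

/-- The canonical form of an ideal `J`: the set of minimal pseudomonomials of `J`,
i.e. pseudomonomials `f ∈ J` such that no pseudomonomial `g ≠ f` dividing `f` lies in `J`. -/
def CF {n : ℕ} (J : Ideal (MvPolynomial (Fin n) (ZMod 2))) :
    Set (MvPolynomial (Fin n) (ZMod 2)) :=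
  {f | IsPseudomonomial f ∧ f ∈ J ∧
    ∀ g : MvPolynomial (Fin n) (ZMod 2), IsPseudomonomial g → g ∣ f → g ≠ f → g ∉ J}
lemma psm_ne_zero (n : ℕ) (σ τ : Finset (Fin n)) : psm n σ τ ≠ 0 := by
  unfold psm
  apply mul_ne_zero
  · exact Finset.prod_ne_zero_iff.mpr fun i _ => X_ne_zero i
  · refine Finset.prod_ne_zero_iff.mpr fun i _ => sub_ne_zero_of_ne ?_
    intro h
    have := congrArg (coeff 0) h
    simp at this

lemma unit_eq_one : ∀ {n : ℕ} (x : MvPolynomial (Fin n) (ZMod 2)), IsUnit x → x = 1 := by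
  intro n
  induction n with
  | zero =>
    intro x hx
    obtain ⟨a, rfl⟩ := MvPolynomial.C_surjective (Fin 0) x
    have ha : IsUnit a := by
      have := hx.map (constantCoeff (σ := Fin 0) (R := ZMod 2))
      simpa using this
    have : a = 1 := by
      fin_cases a
      · exact absurd rfl ha.ne_zero
      · rfl
    simp [this]
  | succ m ih =>
    intro x hx
    have hx' : IsUnit (finSuccEquiv (ZMod 2) m x) :=
      hx.map (finSuccEquiv (ZMod 2) m).toRingEquiv.toRingHom
    obtain ⟨r, hr, hCr⟩ := Polynomial.isUnit_iff.mp hx'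
    have hr1 : r = 1 := ih r hr
    have : finSuccEquiv (ZMod 2) m x = 1 := by rw [← hCr, hr1, map_one]
    have := congrArg (finSuccEquiv (ZMod 2) m).symm this
    simpa using this

lemma key {n : ℕ} (J : Ideal (MvPolynomial (Fin n) (ZMod 2))) :
    ∀ h : MvPolynomial (Fin n) (ZMod 2), IsPseudomonomial h → h ∈ J →
      ∃ f ∈ CF J, f ∣ h := by
  have wf : WellFounded (DvdNotUnit (α := MvPolynomial (Fin n) (ZMod 2))) :=
    wellFounded_dvdNotUnit
  intro h
  induction h using wf.induction with
  | _ h IH =>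
    intro hps hJ
    by_cases hmin : ∀ g', IsPseudomonomial g' → g' ∣ h → g' ≠ h → g' ∉ J
    · exact ⟨h, ⟨hps, hJ, hmin⟩, dvd_refl h⟩
    · push_neg at hmin
      obtain ⟨g', hg'ps, hg'dvd, hg'ne, hg'J⟩ := hmin
      obtain ⟨x, hx⟩ := hg'dvd
      have hg'0 : g' ≠ 0 := by
        obtain ⟨σ, τ, _, rfl⟩ := hg'ps
        exact psm_ne_zero n σ τ
      have hdnu : DvdNotUnit g' h := by
        refine ⟨hg'0, x, ?_, hx⟩
        intro hux
        have : h = g' := by rw [hx, unit_eq_one x hux, mul_one]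
        exact hg'ne this.symm
      obtain ⟨f, hf, hfd⟩ := IH g' hdnu hg'ps hg'J
      exact ⟨f, hf, hfd.trans ⟨x, hx⟩⟩


/-- Proposition "origgensstay": for an ideal generated by pseudomonomials `g₁,…,g_k`, every
generator `g_j` is divisible by some element of the canonical form. -/
theorem stmt12 {n k : ℕ} (hn : 0 < n)
    (g : Fin k → MvPolynomial (Fin n) (ZMod 2))
    (hg : ∀ j, IsPseudomonomial (g j)) (j : Fin k) :
    ∃ f ∈ CF (Ideal.span (Set.range g)), f ∣ g j :=
  key _ (g j) (hg j) (Ideal.subset_span ⟨j, rfl⟩)
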